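/- Let M be the even-r Kikuchi matrix of a symmetric rank-one tensor λ·v^{⊗r} for a vector v ∈ {±1}^n, i.e., the matrix indexed by ℓ-subsets I, J of {1,...,n} with M[I,J] = λ·∏_{i∈IΔJ} v_i when |I Δ J| = r and 0 otherwise. Let ṽ be the vector with entries ṽ[I] = ∏_{i∈I} v_i. Then the quadratic form ṽᵀ M ṽ / ||ṽ||² equals λ · C(n-ℓ, r/2) · C(ℓ, r/2), provided r is even, r ≤ 2ℓ, and ℓ + r/2 ≤ n. -/

import Mathlib

/-!
Since `v_i² = 1`, the products `ṽ[I] = ∏_{i ∈ I} v_i` satisfy `ṽ[I] ṽ[J] = ∏_{i ∈ I Δ J} v_i`,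
so every nonzero term `ṽ[I] M[I,J] ṽ[J]` of the quadratic form equals `λ`, and `‖ṽ‖² = C(n, ℓ)`.
Each row `I` thus contributes `λ` times the number of `ℓ`-sets `J` with `|I Δ J| = r`; such a `J`
arises from `I` by trading `r/2` of its elements for `r/2` elements outside it, so there are
`C(ℓ, r/2) · C(n - ℓ, r/2)` of them.
-/

open Finset Matrix
open scoped symmDiff

namespace Finset

variable {ι : Type*} [DecidableEq ι]

lemma card_symmDiff (s t : Finset ι) : #(s ∆ t) = #(s \ t) + #(t \ s) :=
  card_union_of_disjoint disjoint_sdiff_sdiff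

lemma prod_mul_prod_eq_prod_symmDiff {M : Type*} [CommMonoid M] {f : ι → M} (s t : Finset ι)
    (hf : ∀ i ∈ s ∩ t, f i * f i = 1) :
    (∏ i ∈ s, f i) * ∏ i ∈ t, f i = ∏ i ∈ s ∆ t, f i := by
  have hsq : (∏ i ∈ s ∩ t, f i) * ∏ i ∈ t ∩ s, f i = 1 := by
    rw [inter_comm, ← prod_mul_distrib]
    exact prod_eq_one fun i hi => hf i (inter_comm s t ▸ hi)
  rw [← prod_inter_mul_prod_sdiff s t, ← prod_inter_mul_prod_sdiff t s, Finset.symmDiff_def,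
    prod_union disjoint_sdiff_sdiff]
  calc (∏ i ∈ s ∩ t, f i) * (∏ i ∈ s \ t, f i) * ((∏ i ∈ t ∩ s, f i) * ∏ i ∈ t \ s, f i)
      = ((∏ i ∈ s ∩ t, f i) * ∏ i ∈ t ∩ s, f i) * ((∏ i ∈ s \ t, f i) * ∏ i ∈ t \ s, f i) := by
        ac_rfl
    _ = (∏ i ∈ s \ t, f i) * ∏ i ∈ t \ s, f i := by rw [hsq, one_mul]

lemma sdiff_sdiff_union_of_subset_of_disjoint {I A B : Finset ι} (hA : A ⊆ I)
    (hB : Disjoint B I) : I \ (I \ A ∪ B) = A ∧ (I \ A ∪ B) \ I = B := by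
  have hBI : ∀ x ∈ B, x ∉ I := fun _ hx => disjoint_left.1 hB hx
  constructor <;> ext x <;> simp only [mem_sdiff, mem_union] <;>
    have := @hA x <;> have := hBI x <;> tauto

theorem card_filter_powersetCard_card_symmDiff_eq [Fintype ι] {I : Finset ι} {ℓ : ℕ}
    (hI : #I = ℓ) (k : ℕ) :
    #{J ∈ powersetCard ℓ univ | #(I ∆ J) = 2 * k} =
      (Fintype.card ι - ℓ).choose k * ℓ.choose k := by
  subst hI
  calc #{J ∈ powersetCard #I univ | #(I ∆ J) = 2 * k}
      = #(powersetCard k Iᶜ ×ˢ powersetCard k I) := by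
        refine card_bij' (fun J _ => (J \ I, I \ J)) (fun p _ => I \ p.2 ∪ p.1)
          ?_ ?_ ?_ ?_
        · intro J hJ
          simp only [mem_filter, mem_powersetCard, subset_univ, true_and] at hJ
          have hsdiff : #(I \ J) = #(J \ I) := card_sdiff_comm hJ.1.symm
          rw [card_symmDiff] at hJ
          simp only [mem_product, mem_powersetCard, subset_compl_iff_disjoint_right,
            sdiff_subset, true_and]
          exact ⟨⟨disjoint_sdiff_self_left, by omega⟩, by omega⟩
        · rintro ⟨B, A⟩ hp
          simp only [mem_product, mem_powersetCard, subset_compl_iff_disjoint_right] at hp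
          obtain ⟨⟨hB, hBk⟩, hA, hAk⟩ := hp
          obtain ⟨hIA, hBI⟩ := sdiff_sdiff_union_of_subset_of_disjoint hA hB
          have hcard : #(I \ A ∪ B) = #I := by
            rw [card_union_of_disjoint (disjoint_of_subset_left sdiff_subset hB.symm),
              card_sdiff_of_subset hA]
            have := card_le_card hA
            omega
          simp only [mem_filter, mem_powersetCard, subset_univ, true_and, card_symmDiff, hIA,
            hBI, hcard]
          omega
        · intro J _
          rw [sdiff_sdiff_right_self, inf_eq_inter, inter_comm, union_comm, sdiff_union_inter]
        · rintro ⟨B, A⟩ hp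
          simp only [mem_product, mem_powersetCard, subset_compl_iff_disjoint_right] at hp
          obtain ⟨hIA, hBI⟩ := sdiff_sdiff_union_of_subset_of_disjoint hp.2.1 hp.1.1
          rw [hIA, hBI]
    _ = (Fintype.card ι - #I).choose k * (#I).choose k := by
        rw [card_product, card_powersetCard, card_powersetCard, card_compl]

theorem sum_ite_card_symmDiff_eq_two_mul {M : Type*} [AddCommMonoid M] [Fintype ι]
    {I : Finset ι} {ℓ : ℕ} (hI : #I = ℓ) (k : ℕ) (c : M) :
    ∑ J : {J : Finset ι // #J = ℓ}, (if #(I ∆ J.1) = 2 * k then c else 0) =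
      ((Fintype.card ι - ℓ).choose k * ℓ.choose k) • c := by
  rw [← sum_subtype (powersetCard ℓ univ) (by simp) fun J => if #(I ∆ J) = 2 * k then c else 0,
    ← sum_filter, sum_const, card_filter_powersetCard_card_symmDiff_eq hI]

end Finset

theorem kikuchi_quadratic_form_rank_one_general (n ℓ r : ℕ) (hr : Even r)
    (hn : ℓ + r / 2 ≤ n) (lam : ℝ) (v : Fin n → ℝ) (hv : ∀ i, v i = 1 ∨ v i = -1)
    (M : Matrix {I : Finset (Fin n) // I.card = ℓ} {I : Finset (Fin n) // I.card = ℓ} ℝ)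
    (hM : ∀ I J, M I J =
      if (symmDiff I.1 J.1).card = r then lam * ∏ i ∈ symmDiff I.1 J.1, v i else 0)
    (vt : {I : Finset (Fin n) // I.card = ℓ} → ℝ)
    (hvt : ∀ I, vt I = ∏ i ∈ I.1, v i) :
    dotProduct vt (M.mulVec vt) / dotProduct vt vt =
      lam * ((n - ℓ).choose (r / 2) * ℓ.choose (r / 2)) := by
  obtain ⟨k, rfl⟩ := even_iff_two_dvd.mp hr
  have hsq : ∀ i, v i * v i = 1 := fun i => by rcases hv i with h | h <;> simp [h]
  have hprod : ∀ S T : Finset (Fin n), (∏ i ∈ S, v i) * ∏ i ∈ T, v i = ∏ i ∈ S ∆ T, v i :=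
    fun S T => prod_mul_prod_eq_prod_symmDiff S T fun i _ => hsq i
  have hprod_sq : ∀ S : Finset (Fin n), (∏ i ∈ S, v i) * ∏ i ∈ S, v i = 1 := fun S => by
    rw [hprod, symmDiff_self, bot_eq_empty, prod_empty]
  have hentry : ∀ I J, vt I * (M I J * vt J) = if #(I.1 ∆ J.1) = 2 * k then lam else 0 := by
    intro I J
    rw [hM]
    split_ifs
    · calc vt I * ((lam * ∏ i ∈ I.1 ∆ J.1, v i) * vt J)
          = lam * ((∏ i ∈ I.1 ∆ J.1, v i) * (vt I * vt J)) := by ring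
        _ = lam := by rw [hvt, hvt, hprod I.1 J.1, hprod_sq, mul_one]
    · rw [zero_mul, mul_zero]
  have hrow : ∀ I, vt I * (M *ᵥ vt) I = lam * ((n - ℓ).choose k * ℓ.choose k) := fun I => by
    rw [mulVec, dotProduct, mul_sum]
    simp_rw [hentry]
    rw [sum_ite_card_symmDiff_eq_two_mul I.2, Fintype.card_fin, nsmul_eq_mul]
    push_cast
    ring
  have hvt_sq : ∀ I, vt I * vt I = 1 := fun I => by rw [hvt]; exact hprod_sq _
  have hcard : (Fintype.card {I : Finset (Fin n) // #I = ℓ} : ℝ) ≠ 0 := by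
    rw [Fintype.card_finset_len, Fintype.card_fin]
    exact_mod_cast (Nat.choose_pos (by omega)).ne'
  simp only [dotProduct, hrow, hvt_sq, sum_const, card_univ, nsmul_eq_mul, mul_one,
    Nat.mul_div_cancel_left k two_pos]
  rw [mul_div_cancel_left₀ _ hcard]

/-- The quadratic form of the even-`r` Kikuchi matrix of the rank-one tensor `λ·v^{⊗r}`,
evaluated at the vector `ṽ[I] = ∏_{i∈I} v_i` and normalized by `‖ṽ‖²`, equals
`λ · C(n-ℓ, r/2) · C(ℓ, r/2)`. -/
theorem kikuchi_quadratic_form_rank_one (n ℓ r : ℕ) (hr : Even r) (hrℓ : r ≤ 2 * ℓ)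
    (hn : ℓ + r / 2 ≤ n) (lam : ℝ) (v : Fin n → ℝ) (hv : ∀ i, v i = 1 ∨ v i = -1)
    (M : Matrix {I : Finset (Fin n) // I.card = ℓ} {I : Finset (Fin n) // I.card = ℓ} ℝ)
    (hM : ∀ I J, M I J =
      if (symmDiff I.1 J.1).card = r then lam * ∏ i ∈ symmDiff I.1 J.1, v i else 0)
    (vt : {I : Finset (Fin n) // I.card = ℓ} → ℝ)
    (hvt : ∀ I, vt I = ∏ i ∈ I.1, v i) :
    dotProduct vt (M.mulVec vt) / dotProduct vt vt =
      lam * ((n - ℓ).choose (r / 2) * ℓ.choose (r / 2)) :=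
  kikuchi_quadratic_form_rank_one_general n ℓ r hr hn lam v hv M hM vt hvt
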